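/- arXiv:1911.08155 — 7 statements merged into one kernel-verified Lean document; each statement's English description precedes it below -/
import Mathlib

section
/- With σ₁, σ₂, σ₃ the 3×3 matrices defined from real parameters λ₁, λ₂, μ₁, μ₂ as σ₁ = diag(λ₁+λ₂, −λ₁, −λ₂), σ₂ = [[0,−λ₁,0],[−λ₁,μ₁,μ₂],[0,μ₂,−μ₁]], σ₃ = [[0,0,−λ₂],[0,μ₂,−μ₁],[−λ₂,−μ₁,−μ₂]], setting S = ∑_{i,j,k} (σᵢ)_{jk}² one has ∑_{i,j=1}^{3} ⟨σᵢ,σⱼ⟩² − S²/5 = (3/2)x² + (3/10)y² + (3/10)z² + 3xy + (9/10)yz, where x = (λ₁+λ₂)², y = (λ₁−λ₂)², z = 4(μ₁²+μ₂²). -/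
open Matrix

theorem stmt_3 (l₁ l₂ m₁ m₂ : ℝ) :
    let σ : Fin 3 → Matrix (Fin 3) (Fin 3) ℝ :=
      ![!![l₁ + l₂, 0, 0; 0, -l₁, 0; 0, 0, -l₂],
        !![0, -l₁, 0; -l₁, m₁, m₂; 0, m₂, -m₁],
        !![0, 0, -l₂; 0, m₂, -m₁; -l₂, -m₁, -m₂]]
    let S : ℝ := ∑ i : Fin 3, ∑ j : Fin 3, ∑ k : Fin 3, (σ i j k)^2
    let x : ℝ := (l₁ + l₂)^2
    let y : ℝ := (l₁ - l₂)^2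
    let z : ℝ := 4*(m₁^2 + m₂^2)
    (∑ i : Fin 3, ∑ j : Fin 3, (((σ i)ᵀ * σ j).trace)^2) - S^2/5 =
      (3/2)*x^2 + (3/10)*y^2 + (3/10)*z^2 + 3*x*y + (9/10)*y*z := by
  intro σ S x y z
  simp only [σ, S, x, y, z, Fin.sum_univ_three, trace_fin_three, transpose_apply,
    Matrix.mul_apply, Fin.sum_univ_three, cons_val_zero, cons_val_one, head_cons,
    cons_val_two, tail_cons, Matrix.cons_val', Matrix.transpose, of_apply]
  ring
end

section
/- For real numbers λ₁, λ₂, μ₁, μ₂, let S = 4λ₁² + 4λ₂² + 2λ₁λ₂ + 4(μ₁²+μ₂²), Q = 4(λ₁²+λ₂²+λ₁λ₂)² + 4(λ₁²+μ₁²+μ₂²)² + 4(λ₂²+μ₁²+μ₂²)² + 2(λ₁−λ₂)²(μ₁²+μ₂²), and Θ = λ₁+λ₂. Then for every κ ≥ 7/5, Q − S²/5 ≤ (2κ/5)(S − ((5κ−3)/(2κ))Θ²)·S. -/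
theorem stmt_4 (l₁ l₂ m₁ m₂ : ℝ) (κ : ℝ) (hκ : κ ≥ 7/5) :
    let S : ℝ := 4*l₁^2 + 4*l₂^2 + 2*l₁*l₂ + 4*(m₁^2 + m₂^2)
    let Q : ℝ := 4*(l₁^2 + l₂^2 + l₁*l₂)^2 + 4*(l₁^2 + m₁^2 + m₂^2)^2
      + 4*(l₂^2 + m₁^2 + m₂^2)^2 + 2*(l₁ - l₂)^2*(m₁^2 + m₂^2)
    let Θ : ℝ := l₁ + l₂
    Q - S^2/5 ≤ (2*κ/5) * (S - ((5*κ - 3)/(2*κ)) * Θ^2) * S := by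
  intro S Q Θ
  have hSd : S = 4*l₁^2 + 4*l₂^2 + 2*l₁*l₂ + 4*(m₁^2 + m₂^2) := rfl
  have hQd : Q = 4*(l₁^2 + l₂^2 + l₁*l₂)^2 + 4*(l₁^2 + m₁^2 + m₂^2)^2
      + 4*(l₂^2 + m₁^2 + m₂^2)^2 + 2*(l₁ - l₂)^2*(m₁^2 + m₂^2) := rfl
  have hΘd : Θ = l₁ + l₂ := rfl
  clear_value S Q Θ
  have hκ0 : κ ≠ 0 := by positivity
  have hS : (0:ℝ) ≤ S := by
    have h : S = (l₁+l₂)^2 + 3*l₁^2 + 3*l₂^2 + 4*(m₁^2+m₂^2) := by rw [hSd]; ring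
    rw [h]; positivity
  have h2 : 2*S - 5*Θ^2 ≥ 0 := by
    have h : 2*S - 5*Θ^2 = 3*(l₁-l₂)^2 + 8*(m₁^2+m₂^2) := by rw [hSd, hΘd]; ring
    rw [h]; positivity
  have hrhs : (2*κ/5) * (S - ((5*κ - 3)/(2*κ)) * Θ^2) * S
      = (2*κ/5)*S^2 - ((5*κ-3)/5)*Θ^2*S := by field_simp
  rw [hrhs]
  have key : 19*S^2 - 25*Q - 20*Θ^2*S ≥ 0 := by
    rw [hSd, hQd, hΘd]
    nlinarith [sq_nonneg (l₁-l₂), sq_nonneg (l₁+l₂), sq_nonneg (m₁^2+m₂^2), sq_nonneg ((l₁-l₂)^2 - 2*(m₁^2+m₂^2)), sq_nonneg (l₁*l₂), mul_nonneg (sq_nonneg (l₁+l₂)) (sq_nonneg (l₁-l₂)), mul_nonneg (sq_nonneg (l₁-l₂)) (add_nonneg (sq_nonneg m₁) (sq_nonneg m₂)), mul_nonneg (sq_nonneg (l₁+l₂)) (add_nonneg (sq_nonneg m₁) (sq_nonneg m₂)), sq_nonneg (l₁^2+l₂^2 - 2*(m₁^2+m₂^2))]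
  have hmono : (14/25)*S^2 - (4/5)*Θ^2*S ≤ (2*κ/5)*S^2 - ((5*κ-3)/5)*Θ^2*S := by
    have hk : κ - 7/5 ≥ 0 := by linarith
    nlinarith [mul_nonneg (mul_nonneg hk h2) hS]
  linarith
end

section
/- Let n ≥ 3 and let μ₁ > 0 and μ₂, …, μₙ be real numbers with μ₁ + μ₂ + ⋯ + μₙ = 0 and μ₁ ≥ 2μⱼ for all j ≥ 2. Define β = μ₁² + 3∑_{j≥2} μⱼ². If (n+1)μ₁ − μ₁³ + 2∑_{j≥2} μⱼ³ − 3μ₁∑_{j≥2} μⱼ² ≤ 0, then β ≥ (n+2)/√n · μ₁. -/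
/-!
Put `x j = μ₁ / 2 - μ j ≥ 0` for `2 ≤ j ≤ n`. Then `∑ x = (n + 1) μ₁ / 2`,
`β = 3 ∑ x² - (3n + 5) μ₁² / 4`, and the hypothesis says
`∑ x³ ≥ (n + 1) μ₁ / 2 · (1 + μ₁² / 4)`: one has to bound `∑ x²` from below, knowing `∑ x`
and a lower bound for `∑ x³`.

If `√n μ₁ ≥ n - 1`, Cauchy–Schwarz `(∑ x)² ≤ (n - 1) ∑ x²` already suffices. Otherwise let
`M = p + u` be the largest `x j` and `p` the mean of the other `n - 2`. Cauchy–Schwarz on those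
gives `∑ x² ≥ M² + (n - 2) p²`, enough when the gap `u` is large; when `u` is small, summing
`(x - p)² (M - x) ≥ 0` bounds `∑ x³` above by `(M + 2p) ∑ x²` plus terms in `M, p, ∑ x`, and
the hypothesis on `∑ x³` then bounds `∑ x²` below. Each case ends in a polynomial inequality
in `√n, μ₁, u`.
-/

open Finset Real

section
variable {ι : Type*} (t : Finset ι) (x : ι → ℝ)

lemma sum_const_sub_sq (c : ℝ) :
    ∑ i ∈ t, (c - x i) ^ 2 = #t * c ^ 2 - 2 * c * ∑ i ∈ t, x i + ∑ i ∈ t, x i ^ 2 := by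
  simp only [sub_sq, sum_add_distrib, sum_sub_distrib, sum_const, nsmul_eq_mul, ← mul_sum]

lemma sum_const_sub_pow_three (c : ℝ) :
    ∑ i ∈ t, (c - x i) ^ 3 = #t * c ^ 3 - 3 * c ^ 2 * ∑ i ∈ t, x i
      + 3 * c * ∑ i ∈ t, x i ^ 2 - ∑ i ∈ t, x i ^ 3 := by
  have (y : ℝ) : (c - y) ^ 3 = c ^ 3 - 3 * c ^ 2 * y + 3 * c * y ^ 2 - y ^ 3 := by ring
  simp only [this, sum_add_distrib, sum_sub_distrib, sum_const, nsmul_eq_mul, ← mul_sum]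

lemma sum_pow_three_le_of_forall_le (M p : ℝ) (hM : ∀ i ∈ t, x i ≤ M) :
    ∑ i ∈ t, x i ^ 3 ≤ (M + 2 * p) * ∑ i ∈ t, x i ^ 2 - (2 * p * M + p ^ 2) * ∑ i ∈ t, x i
      + #t * (p ^ 2 * M) := by
  calc ∑ i ∈ t, x i ^ 3
      ≤ ∑ i ∈ t, ((M + 2 * p) * x i ^ 2 - (2 * p * M + p ^ 2) * x i + p ^ 2 * M) := by
        refine sum_le_sum fun i hi => ?_
        nlinarith [mul_nonneg (sq_nonneg (x i - p)) (sub_nonneg.2 (hM i hi))]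
    _ = _ := by
        simp only [sum_add_distrib, sum_sub_distrib, sum_const, nsmul_eq_mul, ← mul_sum]

lemma sq_add_card_sub_one_mul_sq_le_sum_sq [DecidableEq ι] {j : ι} (hj : j ∈ t) (p : ℝ)
    (hp : (#t - 1) * p = ∑ i ∈ t, x i - x j) :
    x j ^ 2 + (#t - 1) * p ^ 2 ≤ ∑ i ∈ t, x i ^ 2 := by
  have hsum := sum_erase_add t x hj
  have hsq := sum_erase_add t (fun i => x i ^ 2) hj
  have hcard : ((#(t.erase j) : ℕ) : ℝ) = #t - 1 := by
    rw [card_erase_of_mem hj, Nat.cast_sub (card_pos.2 ⟨j, hj⟩), Nat.cast_one]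
  have hvar : 0 ≤ ∑ i ∈ t.erase j, (p - x i) ^ 2 := sum_nonneg fun i _ => sq_nonneg _
  rw [sum_const_sub_sq, hcard, show ∑ i ∈ t.erase j, x i = (#t - 1) * p by linarith] at hvar
  linarith
end

section
variable {n s a p u L : ℝ}

lemma sub_three_sq_mul_add_two_pow_three_le (hn : 3 ≤ n) :
    (n - 3) ^ 2 * (n + 2) ^ 3 ≤ 27 / 4 * (n + 1) ^ 2 * (n - 2) ^ 3 := by
  nlinarith [sq_nonneg (n - 3), sq_nonneg n, sq_nonneg (n * (n - 3)),
    sq_nonneg ((n - 3) * (n + 2)), sq_nonneg (n * n - 3)]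

lemma le_three_mul_of_cauchySchwarz (hn : 1 < n) (hs : 0 ≤ s) (ha : 0 ≤ a)
    (hsa : n - 1 ≤ s * a) (hL : ((n + 1) * a / 2) ^ 2 ≤ (n - 1) * L) :
    (3 * n + 5) * s * a ^ 2 / 4 + (n + 2) * a ≤ 3 * s * L := by
  have hscaled : s * ((n + 1) * a / 2) ^ 2 ≤ s * ((n - 1) * L) := mul_le_mul_of_nonneg_left hL hs
  have hexcess : 0 ≤ (n + 2) * a * (s * a - (n - 1)) := by
    apply mul_nonneg (mul_nonneg (by linarith) ha); linarith
  nlinarith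

lemma le_three_mul_of_large_gap (hn : 1 < n) (hs : 0 ≤ s)
    (hS : (n - 1) * p + u = (n + 1) * a / 2) (hL : (p + u) ^ 2 + (n - 2) * p ^ 2 ≤ L)
    (hgap : (n + 2) * a * (n - 1 - s * a) < 3 * (n - 2) * s * u ^ 2) :
    (3 * n + 5) * s * a ^ 2 / 4 + (n + 2) * a ≤ 3 * s * L := by
  have key : (n - 1) * ((3 * n + 5) * s * a ^ 2 / 4 + (n + 2) * a
      - 3 * s * ((p + u) ^ 2 + (n - 2) * p ^ 2))
      = (n + 2) * a * (n - 1 - s * a) - 3 * (n - 2) * s * u ^ 2 := by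
    linear_combination -3 * s * ((n - 1) * p + u + (n + 1) * a / 2) * hS
  nlinarith [mul_le_mul_of_nonneg_left hL hs]

lemma mul_gap_le_of_small_gap (hn : 3 ≤ n) (hs : s ^ 2 = n) (hs0 : 0 < s) (ha : 0 ≤ a)
    (hsa : s * a ≤ n - 1)
    (hgap : 3 * (n - 2) * s * u ^ 2 ≤ (n + 2) * a * (n - 1 - s * a)) :
    (n - 3) * (n + 2) * u ≤ 3 / 2 * (n + 1) * ((n - 1) * s - 2 * a) := by
  have hsa0 : 0 ≤ s * a := mul_nonneg hs0.le ha
  have hu2 : 3 * (n - 2) * n * u ^ 2 ≤ (n + 2) * (n - 1) ^ 2 := by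
    have hprod : s * a * (n - 1 - s * a) ≤ (n - 1) * (n - 1) :=
      mul_le_mul hsa (by linarith) (by linarith) (by linarith)
    calc 3 * (n - 2) * n * u ^ 2 = s * (3 * (n - 2) * s * u ^ 2) := by rw [← hs]; ring
      _ ≤ s * ((n + 2) * a * (n - 1 - s * a)) := mul_le_mul_of_nonneg_left hgap hs0.le
      _ = (n + 2) * (s * a * (n - 1 - s * a)) := by ring
      _ ≤ (n + 2) * ((n - 1) * (n - 1)) := mul_le_mul_of_nonneg_left hprod (by linarith)
      _ = (n + 2) * (n - 1) ^ 2 := by ring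
  have hsq :
      (s * ((n - 3) * (n + 2) * u)) ^ 2 ≤ (3 / 2 * (n + 1) * ((n - 1) * (n - 2))) ^ 2 := by
    have e : (s * ((n - 3) * (n + 2) * u)) ^ 2 = (n - 3) ^ 2 * (n + 2) ^ 2 * (n * u ^ 2) := by
      rw [← hs]; ring
    rw [e]
    nlinarith [mul_le_mul_of_nonneg_left hu2 (by positivity : (0:ℝ) ≤ (n - 3) ^ 2 * (n + 2) ^ 2),
      mul_le_mul_of_nonneg_left (sub_three_sq_mul_add_two_pow_three_le hn)
        (by positivity : (0:ℝ) ≤ (n - 1) ^ 2)]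
  have hscaled : s * ((n - 3) * (n + 2) * u) ≤ 3 / 2 * (n + 1) * ((n - 1) * (n - 2)) :=
    abs_le_of_sq_le_sq' hsq (by nlinarith) |>.2
  have hlower : (n - 1) * (n - 2) ≤ s * ((n - 1) * s - 2 * a) := by nlinarith
  have hmul : s * ((n - 3) * (n + 2) * u) ≤ s * (3 / 2 * (n + 1) * ((n - 1) * s - 2 * a)) := by
    nlinarith
  exact le_of_mul_le_mul_left hmul hs0

lemma le_three_mul_of_small_gap (hn : 3 ≤ n) (hs : s ^ 2 = n) (hs0 : 0 < s) (ha : 0 < a)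
    (hsa : s * a ≤ n - 1) (hp : 0 ≤ p) (hu : 0 ≤ u)
    (hS : (n - 1) * p + u = (n + 1) * a / 2)
    (hgap : 3 * (n - 2) * s * u ^ 2 ≤ (n + 2) * a * (n - 1 - s * a))
    (hL : (n + 1) * a / 2 * (1 + a ^ 2 / 4) + (p ^ 2 + 2 * p * (p + u)) * ((n + 1) * a / 2)
      - (n - 1) * (p ^ 2 * (p + u)) ≤ (3 * p + u) * L) :
    (3 * n + 5) * s * a ^ 2 / 4 + (n + 2) * a ≤ 3 * s * L := by
  have key : (n - 1) ^ 2 * (3 * s * ((n + 1) * a / 2 * (1 + a ^ 2 / 4)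
      + (p ^ 2 + 2 * p * (p + u)) * ((n + 1) * a / 2) - (n - 1) * (p ^ 2 * (p + u)))
      - ((3 * n + 5) * s * a ^ 2 / 4 + (n + 2) * a) * (3 * p + u))
      = a * (n - 1 - s * a) * (3 / 2 * (n + 1) * ((n - 1) * s - 2 * a) - (n - 3) * (n + 2) * u)
        + u * ((n + 2) * a * (n - 1 - s * a) - 3 * (n - 2) * s * u ^ 2) := by
    obtain rfl : u = (n + 1) * a / 2 - (n - 1) * p := by linarith
    subst hs
    ring
  have hK : 0 ≤ a * (n - 1 - s * a)
        * (3 / 2 * (n + 1) * ((n - 1) * s - 2 * a) - (n - 3) * (n + 2) * u)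
        + u * ((n + 2) * a * (n - 1 - s * a) - 3 * (n - 2) * s * u ^ 2) := by
    have hW := mul_gap_le_of_small_gap hn hs hs0 ha.le hsa hgap
    exact add_nonneg (mul_nonneg (mul_nonneg ha.le (by linarith)) (by linarith))
      (mul_nonneg hu (by linarith))
  have hD := nonneg_of_mul_nonneg_right (key ▸ hK) (by nlinarith : (0:ℝ) < (n - 1) ^ 2)
  have hpos : 0 < 3 * p + u := by nlinarith
  refine le_of_mul_le_mul_right ?_ hpos
  nlinarith [mul_le_mul_of_nonneg_left hL (by positivity : (0:ℝ) ≤ 3 * s)]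
end

theorem le_three_mul_sqrt_mul_sum_sq {ι : Type*} (t : Finset ι) (x : ι → ℝ) {n a : ℝ}
    (hn : 3 ≤ n) (ht : (#t : ℝ) = n - 1) (ha : 0 < a) (hx : ∀ i ∈ t, 0 ≤ x i)
    (hsum : ∑ i ∈ t, x i = (n + 1) * a / 2)
    (hcube : (n + 1) * a / 2 * (1 + a ^ 2 / 4) ≤ ∑ i ∈ t, x i ^ 3) :
    (3 * n + 5) * √n * a ^ 2 / 4 + (n + 2) * a ≤ 3 * √n * ∑ i ∈ t, x i ^ 2 := by
  classical
  have hs : √n ^ 2 = n := sq_sqrt (by linarith)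
  have hs0 : 0 < √n := sqrt_pos.2 (by linarith)
  by_cases hsa : n - 1 ≤ √n * a
  · refine le_three_mul_of_cauchySchwarz (by linarith) hs0.le ha.le hsa ?_
    rw [← ht, ← hsum]
    exact sq_sum_le_card_mul_sum_sq
  have ht0 : t.Nonempty := card_pos.1 (by exact_mod_cast (by linarith : (0:ℝ) < #t))
  obtain ⟨j, hj, hmax⟩ := exists_max_image t x ht0
  obtain ⟨p, hp⟩ : ∃ p, (n - 2) * p = ∑ i ∈ t, x i - x j :=
    ⟨_, mul_div_cancel₀ _ (by linarith : n - 2 ≠ 0)⟩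
  have hp0 : 0 ≤ p := nonneg_of_mul_nonneg_right (a := n - 2)
    (by linarith [single_le_sum hx hj]) (by linarith)
  have hCS := sq_add_card_sub_one_mul_sq_le_sum_sq t x hj p (by rw [ht, ← hp]; ring)
  have hcub := sum_pow_three_le_of_forall_le t x (x j) p hmax
  obtain ⟨u, hju⟩ : ∃ u, x j = p + u := ⟨x j - p, by ring⟩
  have hu0 : 0 ≤ u := by
    have := sum_le_card_nsmul t x (x j) hmax
    rw [nsmul_eq_mul, ht] at this
    nlinarith
  have hS : (n - 1) * p + u = (n + 1) * a / 2 := by linarith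
  rw [ht, hju, hsum] at hcub
  rw [ht, hju] at hCS
  by_cases hgap : 3 * (n - 2) * √n * u ^ 2 ≤ (n + 2) * a * (n - 1 - √n * a)
  · refine le_three_mul_of_small_gap hn hs hs0 ha (by linarith) hp0 hu0 hS hgap ?_
    linarith
  · exact le_three_mul_of_large_gap (by linarith) hs0.le hS (by linarith) (by linarith)

theorem stmt_6 (n : ℕ) (hn : 3 ≤ n) (μ : ℕ → ℝ)
    (hμ1 : 0 < μ 1)
    (hsum : ∑ j ∈ Icc 1 n, μ j = 0)
    (hmax : ∀ j ∈ Icc 2 n, μ 1 ≥ 2 * μ j)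
    (β : ℝ) (hβ : β = (μ 1)^2 + 3 * ∑ j ∈ Icc 2 n, (μ j)^2)
    (h : ((n:ℝ) + 1) * μ 1 - (μ 1)^3 + 2 * ∑ j ∈ Icc 2 n, (μ j)^3
        - 3 * μ 1 * ∑ j ∈ Icc 2 n, (μ j)^2 ≤ 0) :
    β ≥ ((n:ℝ) + 2) / Real.sqrt n * μ 1 := by
  have hcard : (#(Icc 2 n) : ℝ) = n - 1 := by
    rw [Nat.card_Icc, Nat.cast_sub (by omega)]; push_cast; ring
  have hsum' : ∑ j ∈ Icc 2 n, μ j = -μ 1 := by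
    rw [← insert_Icc_add_one_left_eq_Icc (by omega), sum_insert (by simp)] at hsum
    exact eq_neg_of_add_eq_zero_right hsum
  have key := le_three_mul_sqrt_mul_sum_sq (Icc 2 n) (fun j => μ 1 / 2 - μ j)
    (by exact_mod_cast hn : (3 : ℝ) ≤ n) hcard hμ1 (fun j hj => by linarith [hmax j hj])
    (by rw [sum_sub_distrib, sum_const, nsmul_eq_mul, hcard, hsum']; ring)
    (by rw [sum_const_sub_pow_three, hcard, hsum']; linarith)
  rw [sum_const_sub_sq, hcard, hsum'] at key
  rw [ge_iff_le, div_mul_eq_mul_div, div_le_iff₀ (sqrt_pos.2 (by positivity)), hβ]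
  linarith
end

section
/- Let n ≥ 3, μ₁ > 0, and β a real number with β ≥ ((n+2)/(n−1))·μ₁². If 0 ≥ n + 1 + (2(n+6))/(9(n−2)) · ((5n−6)/(2(n+6)) · β/μ₁ − μ₁)² − (3n)/(2(n+6)) · β²/μ₁², then β ≥ ((n+2)/√n)·μ₁. -/
set_option maxHeartbeats 1000000 in
theorem stmt_7 (n : ℕ) (hn : 3 ≤ n) (μ₁ β : ℝ) (hμ : 0 < μ₁)
    (hβ : β ≥ (((n:ℝ) + 2) / ((n:ℝ) - 1)) * μ₁^2)
    (h : 0 ≥ (n:ℝ) + 1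
        + (2*((n:ℝ) + 6)) / (9*((n:ℝ) - 2))
          * ((5*(n:ℝ) - 6) / (2*((n:ℝ) + 6)) * (β / μ₁) - μ₁)^2
        - (3*(n:ℝ)) / (2*((n:ℝ) + 6)) * (β^2 / μ₁^2)) :
    β ≥ (((n:ℝ) + 2) / Real.sqrt n) * μ₁ := by
  have hN : (3:ℝ) ≤ (n:ℝ) := by exact_mod_cast hn
  have hn2 : (0:ℝ) < (n:ℝ) - 2 := by linarith
  have hn6 : (0:ℝ) < (n:ℝ) + 6 := by linarith
  have hn1 : (0:ℝ) < (n:ℝ) - 1 := by linarith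
  have hμ0 : μ₁ ≠ 0 := ne_of_gt hμ
  -- clear denominators in h
  have h' : 0 ≥ ((n:ℝ) + 1) * (18 * ((n:ℝ) - 2) * ((n:ℝ) + 6) * μ₁^2)
      + 4 * ((n:ℝ) + 6)^2 * ((5*(n:ℝ) - 6) / (2*((n:ℝ) + 6)) * (β / μ₁) - μ₁)^2 * μ₁^2
      - 27 * (n:ℝ) * ((n:ℝ) - 2) * β^2 := by
    have := mul_nonpos_of_nonpos_of_nonneg (le_of_not_gt (fun hc => absurd h (by push_neg; exact hc)))
      (le_of_lt (by positivity : (0:ℝ) < 18 * ((n:ℝ) - 2) * ((n:ℝ) + 6) * μ₁^2))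
    calc ((n:ℝ) + 1) * (18 * ((n:ℝ) - 2) * ((n:ℝ) + 6) * μ₁^2)
        + 4 * ((n:ℝ) + 6)^2 * ((5*(n:ℝ) - 6) / (2*((n:ℝ) + 6)) * (β / μ₁) - μ₁)^2 * μ₁^2
        - 27 * (n:ℝ) * ((n:ℝ) - 2) * β^2
        = ((n:ℝ) + 1
          + (2*((n:ℝ) + 6)) / (9*((n:ℝ) - 2))
            * ((5*(n:ℝ) - 6) / (2*((n:ℝ) + 6)) * (β / μ₁) - μ₁)^2
          - (3*(n:ℝ)) / (2*((n:ℝ) + 6)) * (β^2 / μ₁^2))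
          * (18 * ((n:ℝ) - 2) * ((n:ℝ) + 6) * μ₁^2) := by
          field_simp
          ring
      _ ≤ 0 := this
  have hsq : 4 * ((n:ℝ) + 6)^2 * ((5*(n:ℝ) - 6) / (2*((n:ℝ) + 6)) * (β / μ₁) - μ₁)^2 * μ₁^2
      = ((5*(n:ℝ) - 6) * β - 2*((n:ℝ) + 6) * μ₁^2)^2 := by
    field_simp
    ring
  rw [hsq] at h'
  -- cleared form of hβ
  have hA : 0 ≤ ((n:ℝ) - 1) * β - ((n:ℝ) + 2) * μ₁^2 := by
    have h1 : (((n:ℝ) + 2) / ((n:ℝ) - 1)) * μ₁^2 * ((n:ℝ) - 1) = ((n:ℝ) + 2) * μ₁^2 := by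
      field_simp
    nlinarith [mul_le_mul_of_nonneg_right hβ hn1.le]
  have hQ : 0 ≤ (5*(n:ℝ) - 6) * ((n:ℝ) + 2) * β - ((n:ℝ) + 6) * ((n:ℝ) - 1) * β
      - ((n:ℝ) + 6) * ((n:ℝ) + 2) * μ₁^2 := by
    have hid : ((n:ℝ) - 1) * ((5*(n:ℝ) - 6) * ((n:ℝ) + 2) * β - ((n:ℝ) + 6) * ((n:ℝ) - 1) * β
        - ((n:ℝ) + 6) * ((n:ℝ) + 2) * μ₁^2)
        = (4*(n:ℝ)^2 - (n:ℝ) - 6) * (((n:ℝ) - 1) * β - ((n:ℝ) + 2) * μ₁^2)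
          + 3*(n:ℝ)*((n:ℝ) - 2)*((n:ℝ) + 2) * μ₁^2 := by ring
    have hc : (0:ℝ) ≤ 4*(n:ℝ)^2 - (n:ℝ) - 6 := by nlinarith
    have h3 : (0:ℝ) ≤ 3*(n:ℝ)*((n:ℝ) - 2)*((n:ℝ) + 2) * μ₁^2 := by positivity
    have hmul : 0 ≤ ((n:ℝ) - 1) * ((5*(n:ℝ) - 6) * ((n:ℝ) + 2) * β - ((n:ℝ) + 6) * ((n:ℝ) - 1) * β
        - ((n:ℝ) + 6) * ((n:ℝ) + 2) * μ₁^2) := by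
      rw [hid]; exact add_nonneg (mul_nonneg hc hA) h3
    exact nonneg_of_mul_nonneg_right hmul hn1
  -- key polynomial inequality: n β² ≥ (n+2)² μ₁²
  have key : ((n:ℝ) + 2)^2 * μ₁^2 ≤ (n:ℝ) * β^2 := by
    have hPQ : 0 ≤ (((n:ℝ) - 1) * β - ((n:ℝ) + 2) * μ₁^2)
        * ((5*(n:ℝ) - 6) * ((n:ℝ) + 2) * β - ((n:ℝ) + 6) * ((n:ℝ) - 1) * β
          - ((n:ℝ) + 6) * ((n:ℝ) + 2) * μ₁^2) := mul_nonneg hA hQ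
    have hid : 18*((n:ℝ) + 6)*((n:ℝ) - 2)*((n:ℝ) + 1) * ((n:ℝ) * β^2 - ((n:ℝ) + 2)^2 * μ₁^2)
        = -(((n:ℝ) + 2)^2) * (((n:ℝ) + 1) * (18 * ((n:ℝ) - 2) * ((n:ℝ) + 6) * μ₁^2)
            + ((5*(n:ℝ) - 6) * β - 2*((n:ℝ) + 6) * μ₁^2)^2
            - 27 * (n:ℝ) * ((n:ℝ) - 2) * β^2)
          + 4*((n:ℝ) + 6) * ((((n:ℝ) - 1) * β - ((n:ℝ) + 2) * μ₁^2)
            * ((5*(n:ℝ) - 6) * ((n:ℝ) + 2) * β - ((n:ℝ) + 6) * ((n:ℝ) - 1) * β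
              - ((n:ℝ) + 6) * ((n:ℝ) + 2) * μ₁^2)) := by ring
    have hpos : (0:ℝ) < 18*((n:ℝ) + 6)*((n:ℝ) - 2)*((n:ℝ) + 1) := by positivity
    have hrhs : 0 ≤ 18*((n:ℝ) + 6)*((n:ℝ) - 2)*((n:ℝ) + 1)
        * ((n:ℝ) * β^2 - ((n:ℝ) + 2)^2 * μ₁^2) := by
      rw [hid]
      have h1 : 0 ≤ -(((n:ℝ) + 2)^2) * (((n:ℝ) + 1) * (18 * ((n:ℝ) - 2) * ((n:ℝ) + 6) * μ₁^2)
          + ((5*(n:ℝ) - 6) * β - 2*((n:ℝ) + 6) * μ₁^2)^2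
          - 27 * (n:ℝ) * ((n:ℝ) - 2) * β^2) := by
        have heq : -(((n:ℝ) + 2)^2) * (((n:ℝ) + 1) * (18 * ((n:ℝ) - 2) * ((n:ℝ) + 6) * μ₁^2)
            + ((5*(n:ℝ) - 6) * β - 2*((n:ℝ) + 6) * μ₁^2)^2
            - 27 * (n:ℝ) * ((n:ℝ) - 2) * β^2)
            = ((n:ℝ) + 2)^2 * (-(((n:ℝ) + 1) * (18 * ((n:ℝ) - 2) * ((n:ℝ) + 6) * μ₁^2)
            + ((5*(n:ℝ) - 6) * β - 2*((n:ℝ) + 6) * μ₁^2)^2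
            - 27 * (n:ℝ) * ((n:ℝ) - 2) * β^2)) := by ring
        rw [heq]
        exact mul_nonneg (sq_nonneg _) (by linarith)
      exact add_nonneg h1 (mul_nonneg (by positivity : (0:ℝ) ≤ 4*((n:ℝ) + 6)) hPQ)
    have hfin := nonneg_of_mul_nonneg_right hrhs hpos
    linarith
  -- conclude via square roots
  have hβpos : 0 < β := by nlinarith [sq_nonneg μ₁, mul_pos hμ hμ]
  have hnpos : (0:ℝ) < (n:ℝ) := by linarith
  have hsn : 0 < Real.sqrt n := Real.sqrt_pos.mpr hnpos
  rw [ge_iff_le, div_mul_eq_mul_div, div_le_iff₀ hsn]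
  have h1 : ((n:ℝ) + 2) * μ₁ = Real.sqrt (((n:ℝ) + 2)^2 * μ₁^2) := by
    rw [Real.sqrt_mul (sq_nonneg _), Real.sqrt_sq (by linarith), Real.sqrt_sq hμ.le]
  have h2 : β * Real.sqrt n = Real.sqrt ((n:ℝ) * β^2) := by
    rw [Real.sqrt_mul hnpos.le, Real.sqrt_sq hβpos.le]; ring
  rw [h1, h2]
  exact Real.sqrt_le_sqrt key
end

section
/- Let n ≥ 2 and let σ be a symmetric trilinear form on ℝⁿ with components σ₁₁₁ = (n−1)/√n, σ₁ⱼⱼ = −1/√n for 2 ≤ j ≤ n, and all other components (up to symmetry) zero. Then the maximum of σ(X,X,X) over unit vectors X ∈ ℝⁿ equals (n−1)/√n. -/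
open Finset Real

/-!
In the adapted frame, `σ = ((n + 2) e⁰ ⊗ e⁰ ⊗ e⁰ - sym(e⁰ ⊗ g)) / √n` with `g` the Euclidean metric,
so on the unit sphere `σ(X, X, X) = ((n + 2) t³ - 3 t) / √n` where `t = X 0 ∈ [-1, 1]`. Then
`(n - 1) - ((n + 2) t³ - 3 t) = (1 - t) ((n + 2) t² + (n + 2) t + (n - 1)) ≥ 0`, the quadratic
having discriminant `(n + 2)(6 - 3n) ≤ 0` for `n ≥ 2`; equality holds at `X = e₀`.
-/

/-- The cubic form of the Calabi torus in an adapted orthonormal frame: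
`σ 0 0 0 = (n-1)/√n`, `σ 0 j j = -1/√n` (up to symmetry) for `j.val ≠ 0`,
all other components zero. -/
noncomputable def calabiSigma (n : ℕ) (i j k : Fin n) : ℝ :=
  if i.val = 0 ∧ j.val = 0 ∧ k.val = 0 then ((n : ℝ) - 1) / Real.sqrt n
  else if i.val = 0 ∧ j = k ∧ j.val ≠ 0 then -1 / Real.sqrt n
  else if j.val = 0 ∧ i = k ∧ i.val ≠ 0 then -1 / Real.sqrt n
  else if k.val = 0 ∧ i = j ∧ i.val ≠ 0 then -1 / Real.sqrt n
  else 0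

theorem calabiSigma_eq {n : ℕ} [NeZero n] (i j k : Fin n) :
    calabiSigma n i j k =
      ((if i = 0 ∧ j = 0 ∧ k = 0 then (n : ℝ) + 2 else 0)
        - ((if i = 0 ∧ j = k then 1 else 0) + (if j = 0 ∧ i = k then 1 else 0)
          + (if k = 0 ∧ i = j then 1 else 0))) / √n := by
  unfold calabiSigma
  simp only [Fin.val_eq_zero_iff]
  split_ifs <;> grind

theorem sum_calabiSigma {n : ℕ} [NeZero n] (X : Fin n → ℝ) :
    ∑ i, ∑ j, ∑ k, X i * X j * X k * calabiSigma n i j k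
      = ((n + 2) * X 0 ^ 3 - 3 * X 0 * ∑ i, X i ^ 2) / √n := by
  simp only [calabiSigma_eq, ite_and, mul_div_assoc', mul_sub, mul_ite, mul_add, mul_zero, mul_one,
    ← sum_div, sum_sub_distrib, sum_ite_irrel, sum_ite_eq', mem_univ, ↓reduceIte, sum_const_zero,
    sum_add_distrib, sum_ite_eq, mul_sum]
  simp only [← sum_add_distrib]
  ring_nf

theorem cubic_le_of_le_one {m t : ℝ} (hm : 2 ≤ m) (ht : t ≤ 1) :
    (m + 2) * t ^ 3 - 3 * t ≤ m - 1 := by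
  have hquad : 0 ≤ (m + 2) * t ^ 2 + (m + 2) * t + (m - 1) := by
    nlinarith [sq_nonneg (2 * t + 1)]
  nlinarith [mul_nonneg (sub_nonneg.2 ht) hquad]

theorem stmt_12 (n : ℕ) (hn : 2 ≤ n) :
    IsGreatest {r : ℝ | ∃ X : Fin n → ℝ, ∑ i, (X i)^2 = 1 ∧
        r = ∑ i : Fin n, ∑ j : Fin n, ∑ k : Fin n,
          X i * X j * X k * calabiSigma n i j k}
      (((n : ℝ) - 1) / Real.sqrt n) := by
  have : NeZero n := ⟨by omega⟩
  have hsq : ∑ i, (Pi.single 0 1 : Fin n → ℝ) i ^ 2 = 1 := by simp [Pi.single_apply]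
  refine ⟨⟨Pi.single 0 1, hsq, ?_⟩, ?_⟩
  · rw [sum_calabiSigma, hsq, Pi.single_eq_same]
    ring
  · rintro _ ⟨X, hX, rfl⟩
    rw [sum_calabiSigma, hX, mul_one]
    have hX0 : X 0 ^ 2 ≤ 1 := hX ▸ single_le_sum (fun i _ => sq_nonneg (X i)) (mem_univ 0)
    have hX0_le : X 0 ≤ 1 := (abs_le.mp ((sq_le_one_iff_abs_le_one _).mp hX0)).2
    exact div_le_div_of_nonneg_right (cubic_le_of_le_one (by exact_mod_cast hn) hX0_le)
      (sqrt_nonneg _)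
end

section
/- Let σ be a symmetric trilinear form on an n-dimensional real inner product space and let e₁ be a unit vector maximizing σ(X,X,X) over the unit sphere, with maximum value μ₁ = σ(e₁,e₁,e₁). If v is a unit vector orthogonal to e₁, then μ₁ ≥ 2σ(e₁,v,v); in particular, in an orthonormal eigenbasis e₁,…,eₙ of σ(e₁,·,·) with eigenvalues μ₁ ≥ μ₂ ≥ … ≥ μₙ, one has μ₁ ≥ 2μ₂. -/
theorem stmt_14 {V : Type*} [NormedAddCommGroup V] [InnerProductSpace ℝ V]
    [FiniteDimensional ℝ V]
    (σ : V →ₗ[ℝ] V →ₗ[ℝ] V →ₗ[ℝ] ℝ)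
    (hsymm : ∀ x y z : V, σ x y z = σ y x z ∧ σ x y z = σ x z y)
    (e₁ : V) (he : ‖e₁‖ = 1)
    (μ₁ : ℝ) (hμ₁ : μ₁ = σ e₁ e₁ e₁)
    (hmax : ∀ X : V, ‖X‖ = 1 → σ X X X ≤ μ₁) :
    ∀ v : V, ‖v‖ = 1 → inner (𝕜 := ℝ) e₁ v = (0 : ℝ) →
      μ₁ ≥ 2 * σ e₁ v v := by
  intro v hv hov
  set a := σ e₁ e₁ v with ha
  set b := σ e₁ v v with hb
  set c := σ v v v with hc
  -- symmetry facts
  have s1 : σ e₁ v e₁ = a := ((hsymm e₁ e₁ v).2).symm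
  have s2 : σ v e₁ e₁ = a := (hsymm v e₁ e₁).1.trans s1
  have s3 : σ v e₁ v = b := ((hsymm e₁ v v).1).symm
  have s4 : σ v v e₁ = b := (hsymm v v e₁).2.trans s3
  -- μ₁ ≥ 0
  have hμ0 : 0 ≤ μ₁ := by
    have h1 := hmax (-e₁) (by simpa using he)
    simp only [map_neg, LinearMap.neg_apply] at h1
    rw [← hμ₁] at h1
    linarith
  -- norm of combinations
  have norm1 : ∀ x y : ℝ, x ^ 2 + y ^ 2 = 1 → ‖x • e₁ + y • v‖ = 1 := by
    intro x y hxy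
    have hsq : ‖x • e₁ + y • v‖ ^ 2 = 1 := by
      rw [norm_add_sq_real]
      rw [inner_smul_left, inner_smul_right]
      simp only [norm_smul, he, hv, hov, RCLike.conj_to_real]
      simp [mul_pow, sq_abs, hxy]
    rw [← Real.sqrt_sq (norm_nonneg _), hsq, Real.sqrt_one]
  -- expansion
  have expand : ∀ x y : ℝ, σ (x • e₁ + y • v) (x • e₁ + y • v) (x • e₁ + y • v)
      = μ₁ * x ^ 3 + 3 * a * x ^ 2 * y + 3 * b * x * y ^ 2 + c * y ^ 3 := by
    intro x y
    simp only [map_add, map_smul, LinearMap.add_apply, LinearMap.smul_apply,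
      smul_eq_mul]
    rw [← hμ₁, s1, s2, s3, s4, ← ha, ← hb, ← hc]
    ring
  have key : ∀ x y : ℝ, x ^ 2 + y ^ 2 = 1 →
      μ₁ * x ^ 3 + 3 * a * x ^ 2 * y + 3 * b * x * y ^ 2 + c * y ^ 3 ≤ μ₁ := by
    intro x y hxy
    rw [← expand x y]
    exact hmax _ (norm1 x y hxy)
  -- the quadratic bound
  have hbnd : ∀ x ∈ Set.Ico (0 : ℝ) 1, b * (x * (1 + x)) ≤ μ₁ := by
    intro x hx
    obtain ⟨hx0, hx1⟩ := hx
    set y := Real.sqrt (1 - x ^ 2) with hy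
    have hy2 : y ^ 2 = 1 - x ^ 2 := Real.sq_sqrt (by nlinarith)
    have h1 := key x y (by linarith)
    have h2 := key x (-y) (by rw [neg_pow]; simp; linarith)
    have hsum : 2 * μ₁ * x ^ 3 + 6 * b * x * y ^ 2 ≤ 2 * μ₁ := by nlinarith
    have h3 : 3 * b * x * (1 - x ^ 2) ≤ μ₁ * (1 - x ^ 3) := by
      rw [hy2] at hsum; nlinarith
    have h4 : (0 : ℝ) < 1 - x := by linarith
    nlinarith [mul_nonneg hμ0 h4.le, sq_nonneg (1 - x), mul_pos h4 h4]
  -- take limit x → 1⁻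
  have htend : Filter.Tendsto (fun x : ℝ => b * (x * (1 + x))) (nhdsWithin 1 (Set.Iio 1))
      (nhds (b * 2)) := by
    have hcont : Continuous (fun x : ℝ => b * (x * (1 + x))) := continuous_const.mul (continuous_id.mul (continuous_const.add continuous_id))
    have := hcont.tendsto 1
    have h2 : b * (1 * (1 + 1)) = b * 2 := by ring
    rw [h2] at this
    exact this.mono_left nhdsWithin_le_nhds
  have hmem : Set.Ioo (0 : ℝ) 1 ∈ nhdsWithin (1 : ℝ) (Set.Iio 1) :=
    Ioo_mem_nhdsLT_of_mem (by constructor <;> norm_num)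
  have hev : ∀ᶠ x in nhdsWithin (1 : ℝ) (Set.Iio 1), b * (x * (1 + x)) ≤ μ₁ :=
    Filter.eventually_of_mem hmem (fun x hx => hbnd x ⟨hx.1.le, hx.2⟩)
  have h2b : b * 2 ≤ μ₁ := le_of_tendsto htend hev
  linarith
end

section
/- Let A₁, A₂, A₃ be symmetric 3×3 real matrices such that the tensor (Aᵢ)_{jk} is fully symmetric in i,j,k and trace-free (∑ⱼ(Aᵢ)_{jj} = 0 for each i), and let them represent an algebraic curvature via R̂_{ijkl} = [Aᵢ,Aⱼ]_{kl} (with Ricci R̂ic_{ij} = −⟨Aᵢ,Aⱼ⟩ and scalar Ŝ = −∑ᵢ|Aᵢ|²). Then in dimension 3 the Weyl part vanishes and |R̂|² = 4|R̂ic|² − Ŝ², i.e., ∑_{i,j}|[Aᵢ,Aⱼ]|² = 4∑_{i,j}⟨Aᵢ,Aⱼ⟩² − (∑ᵢ|Aᵢ|²)². -/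
open Matrix

theorem stmt_18 (A : Fin 3 → Matrix (Fin 3) (Fin 3) ℝ)
    (hsymm : ∀ i : Fin 3, (A i)ᵀ = A i)
    (hfull : ∀ i j k : Fin 3, A i j k = A j i k)
    (htr : ∀ i : Fin 3, (A i).trace = 0) :
    ∑ i : Fin 3, ∑ j : Fin 3,
        (((A i * A j - A j * A i)ᵀ * (A i * A j - A j * A i)).trace) =
      4 * (∑ i : Fin 3, ∑ j : Fin 3, (((A i)ᵀ * A j).trace)^2)
        - (∑ i : Fin 3, ((A i)ᵀ * A i).trace)^2 := by
  have hs : ∀ i j k : Fin 3, A i k j = A i j k :=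
    fun i j k => congrFun (congrFun (hsymm i) j) k
  have e010 : A 0 1 0 = A 0 0 1 := by rw [hs 0 0 1]
  have e020 : A 0 2 0 = A 0 0 2 := by rw [hs 0 0 2]
  have e021 : A 0 2 1 = A 0 1 2 := by rw [hs 0 1 2]
  have e100 : A 1 0 0 = A 0 0 1 := by rw [hfull 1 0 0, hs 0 0 1]
  have e101 : A 1 0 1 = A 0 1 1 := by rw [hfull 1 0 1]
  have e102 : A 1 0 2 = A 0 1 2 := by rw [hfull 1 0 2]
  have e110 : A 1 1 0 = A 0 1 1 := by rw [hs 1 0 1, hfull 1 0 1]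
  have e120 : A 1 2 0 = A 0 1 2 := by rw [hs 1 0 2, hfull 1 0 2]
  have e121 : A 1 2 1 = A 1 1 2 := by rw [hs 1 1 2]
  have e200 : A 2 0 0 = A 0 0 2 := by rw [hfull 2 0 0, hs 0 0 2]
  have e201 : A 2 0 1 = A 0 1 2 := by rw [hfull 2 0 1, hs 0 1 2]
  have e202 : A 2 0 2 = A 0 2 2 := by rw [hfull 2 0 2]
  have e210 : A 2 1 0 = A 0 1 2 := by rw [hfull 2 1 0, hs 1 0 2, hfull 1 0 2]
  have e211 : A 2 1 1 = A 1 1 2 := by rw [hfull 2 1 1, hs 1 1 2]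
  have e212 : A 2 1 2 = A 1 2 2 := by rw [hfull 2 1 2]
  have e220 : A 2 2 0 = A 0 2 2 := by rw [hs 2 0 2, hfull 2 0 2]
  have e221 : A 2 2 1 = A 1 2 2 := by rw [hs 2 1 2, hfull 2 1 2]
  have t0 := htr 0
  have t1 := htr 1
  have t2 := htr 2
  simp only [Matrix.trace, Matrix.diag, Fin.sum_univ_three, e100, e212, e211] at t0 t1 t2
  have e000 : A 0 0 0 = -A 0 1 1 - A 0 2 2 := by linarith
  have e111 : A 1 1 1 = -A 0 0 1 - A 1 2 2 := by linarith
  have e222 : A 2 2 2 = -A 0 0 2 - A 1 1 2 := by linarith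
  simp only [Fin.sum_univ_three, Matrix.trace, Matrix.diag, Matrix.mul_apply,
    Matrix.sub_apply, Matrix.transpose_apply, e010, e020, e021, e100, e101, e102,
    e110, e120, e121, e200, e201, e202, e210, e211, e212, e220, e221, e000, e111, e222]
  ring
end
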